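/- Let 1 < p ≤ q < ∞, X = f_{p,q} over dyadic rectangles, and c = p/q. For nonzero x with ‖x‖ = 1 and any dyadic rectangle I, dist(x, span{e_I}) ≤ 1 − q^{−1}|F_x(e_I)|^{p'}, where p' is the conjugate exponent of p. -/

import Mathlib

open MeasureTheory

/-- A dyadic rectangle `I = I₁ × … × I_d ⊆ [0,1]^d`, where
`I_i = 2^{-j_i}(k_i + [0,1))` with `k_i < 2^{j_i}`. -/
structure DyadicRect (d : ℕ) where
  j : Fin d → ℕ
  k : Fin d → ℕ
  hk : ∀ i, k i < 2 ^ j i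

namespace DyadicRect

/-- The rectangle as a subset of `ℝ^d`. -/
def toSet {d : ℕ} (I : DyadicRect d) : Set (Fin d → ℝ) :=
  {u | ∀ i, (I.k i : ℝ) / 2 ^ I.j i ≤ u i ∧ u i < ((I.k i : ℝ) + 1) / 2 ^ I.j i}

/-- The volume `|I| = ∏ 2^{-j_i}`. -/
noncomputable def vol {d : ℕ} (I : DyadicRect d) : ℝ := ∏ i, ((2 : ℝ) ^ I.j i)⁻¹

/-- The `L^p`-normalized indicator `𝟙_{I,p} = |I|^{-1/p} 𝟙_I`. -/
noncomputable def indp {d : ℕ} (p : ℝ) (I : DyadicRect d) (u : Fin d → ℝ) : ℝ :=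
  I.vol ^ (-(1 / p)) * I.toSet.indicator (fun _ => (1 : ℝ)) u

end DyadicRect

/-- The square-type function `S_q x (u) = (Σ_I |x_I 𝟙_{I,p}(u)|^q)^{1/q}`. -/
noncomputable def Sq {d : ℕ} {𝕜 : Type*} [RCLike 𝕜] (p q : ℝ)
    (x : DyadicRect d → 𝕜) (u : Fin d → ℝ) : ℝ :=
  (∑' I, (‖x I‖ * DyadicRect.indp p I u) ^ q) ^ (1 / q)

/-- The `f_{p,q}` norm `‖x‖ = ‖S_q x‖_{L^p}`. -/
noncomputable def fpqNorm {d : ℕ} {𝕜 : Type*} [RCLike 𝕜] (p q : ℝ)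
    (x : DyadicRect d → 𝕜) : ℝ :=
  (∫ u, Sq p q x u ^ p) ^ (1 / p)

private lemma aux_bern {c s : ℝ} (hc0 : 0 < c) (hc1 : c ≤ 1) (hs0 : 0 ≤ s) (hs1 : s ≤ 1) :
    (1 - s) ^ c ≤ 1 - c * s := by
  have h := rpow_one_add_le_one_add_mul_self (s := -s) (by linarith) hc0.le hc1
  simpa [sub_eq_add_neg, mul_neg] using h

private lemma aux_ineq {c : ℝ} (hc0 : 0 < c) (hc1 : c ≤ 1) {T t : ℝ} (ht : 0 ≤ t)
    (htT : t ≤ T) : c * t * T ^ (c - 1) ≤ T ^ c - (T - t) ^ c := by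
  rcases eq_or_lt_of_le (ht.trans htT) with hT | hT
  · have ht0 : t = 0 := le_antisymm (hT ▸ htT) ht
    simp [ht0, ← hT, Real.zero_rpow hc0.ne']
  · set s := t / T with hs
    have hs1 : s ≤ 1 := (div_le_one hT).2 htT
    have hb := aux_bern hc0 hc1 (div_nonneg ht hT.le) hs1
    have hTc : (0:ℝ) ≤ T ^ c := (Real.rpow_pos_of_pos hT c).le
    have h1 : (T - t) ^ c = T ^ c * (1 - s) ^ c := by
      rw [← Real.mul_rpow hT.le (by linarith), mul_sub, mul_one, hs, mul_div_cancel₀ _ hT.ne']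
    have h2 : T ^ (c - 1) = T ^ c / T := by
      rw [Real.rpow_sub hT, Real.rpow_one]
    have h3 : T ^ c * (1 - s) ^ c ≤ T ^ c * (1 - c * s) :=
      mul_le_mul_of_nonneg_left hb hTc
    have h4 : c * t * (T ^ c / T) = T ^ c * (c * s) := by
      rw [hs]; field_simp
    rw [h1, h2, h4]
    nlinarith [h3]

private lemma vol_pos {d : ℕ} (I : DyadicRect d) : 0 < I.vol :=
  Finset.prod_pos fun i _ => inv_pos.2 (pow_pos two_pos _)

private lemma indp_nonneg {d : ℕ} (p : ℝ) (I : DyadicRect d) (u : Fin d → ℝ) :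
    0 ≤ DyadicRect.indp p I u :=
  mul_nonneg (Real.rpow_nonneg (vol_pos I).le _)
    (Set.indicator_nonneg (fun _ _ => zero_le_one) u)

private lemma Sq_nonneg {d : ℕ} {𝕜 : Type*} [RCLike 𝕜] (p q : ℝ) (z : DyadicRect d → 𝕜)
    (u : Fin d → ℝ) : 0 ≤ Sq p q z u :=
  Real.rpow_nonneg (tsum_nonneg fun I =>
    Real.rpow_nonneg (mul_nonneg (norm_nonneg _) (indp_nonneg p I u)) q) _

private lemma toSet_eq {d : ℕ} (I : DyadicRect d) :
    I.toSet = Set.univ.pi fun i =>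
      Set.Ico ((I.k i : ℝ) / 2 ^ I.j i) (((I.k i : ℝ) + 1) / 2 ^ I.j i) := by
  ext u; simp [DyadicRect.toSet, Set.mem_pi, Set.mem_Ico]

private lemma toSet_measurable {d : ℕ} (I : DyadicRect d) : MeasurableSet I.toSet := by
  rw [toSet_eq]; exact MeasurableSet.univ_pi fun i => measurableSet_Ico

private lemma volume_toSet {d : ℕ} (I : DyadicRect d) :
    MeasureTheory.volume I.toSet = ENNReal.ofReal I.vol := by
  rw [toSet_eq, MeasureTheory.volume_pi_pi]
  have h : ∀ i, MeasureTheory.volume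
        (Set.Ico ((I.k i : ℝ) / 2 ^ I.j i) (((I.k i : ℝ) + 1) / 2 ^ I.j i))
      = ENNReal.ofReal ((2 ^ I.j i : ℝ)⁻¹) := by
    intro i
    rw [Real.volume_Ico]
    congr 1
    field_simp
    ring
  simp_rw [h]
  rw [← ENNReal.ofReal_prod_of_nonneg fun i _ => by positivity]
  rfl

private lemma fpqNorm_nonneg {d : ℕ} {𝕜 : Type*} [RCLike 𝕜] (p q : ℝ)
    (z : DyadicRect d → 𝕜) : 0 ≤ fpqNorm p q z :=
  Real.rpow_nonneg (MeasureTheory.integral_nonneg fun u =>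
    Real.rpow_nonneg (Sq_nonneg p q z u) p) _

set_option maxHeartbeats 1000000 in
open Classical in
/-- For `1 < p ≤ q < ∞` and nonzero `x ∈ f_{p,q}` with `‖x‖ = 1`, and any dyadic
rectangle `I₀`: `dist(x, span{e_{I₀}}) ≤ 1 − q⁻¹ |F_x(e_{I₀})|^{p'}`, where
`|F_x(e_{I₀})| = |x_{I₀}|^{q−1} |I₀|^{−q/p} ∫_{I₀} (S_q x)^{p−q}`. -/
theorem stmt_15 {d : ℕ} {𝕜 : Type*} [RCLike 𝕜] (p q p' : ℝ) (hp : 1 < p) (hpq : p ≤ q)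
    (hp' : 1 / p + 1 / p' = 1)
    (x : DyadicRect d → 𝕜) (hx : x ≠ 0) (hxnorm : fpqNorm p q x = 1)
    (hx1 : ∀ u, Summable fun I => (‖x I‖ * DyadicRect.indp p I u) ^ q)
    (hx2 : MeasureTheory.Integrable fun u => Sq p q x u ^ p)
    (I₀ : DyadicRect d) :
    (⨅ lam : 𝕜, fpqNorm p q fun I => x I - if I = I₀ then lam else 0) ≤
      1 - q⁻¹ * (‖x I₀‖ ^ (q - 1) * I₀.vol ^ (-(q / p)) *
        ∫ u in I₀.toSet, Sq p q x u ^ (p - q)) ^ p' := by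
  classical
  have hq1 : 1 < q := lt_of_lt_of_le hp hpq
  have hp0 : 0 < p := lt_trans one_pos hp
  have hq0 : 0 < q := lt_trans one_pos hq1
  have hpne : p ≠ 0 := hp0.ne'
  have hqne : q ≠ 0 := hq0.ne'
  -- facts about p'
  have hp'ne : p' ≠ 0 := by
    intro h
    rw [h, div_zero, add_zero] at hp'
    have : p = 1 := by field_simp at hp'; linarith
    linarith
  have hp1ne : p - 1 ≠ 0 := sub_ne_zero.2 hp.ne'
  have hp'eq : p' = p / (p - 1) := by
    field_simp at hp' ⊢
    linarith
  have hp'1 : 1 < p' := by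
    rw [hp'eq]
    rw [lt_div_iff₀ (by linarith : (0:ℝ) < p - 1)]
    linarith
  have hpp' : (p - 1) * (p' - 1) = 1 := by
    rw [hp'eq]; field_simp; ring
  -- bddBelow
  have hbdd : BddBelow (Set.range fun lam : 𝕜 =>
      fpqNorm p q fun I => x I - if I = I₀ then lam else 0) := by
    refine ⟨0, fun r hr => ?_⟩
    obtain ⟨lam, rfl⟩ := hr
    exact fpqNorm_nonneg p q _
  -- basic notations
  have hv : 0 < I₀.vol := vol_pos I₀
  have hS : MeasurableSet I₀.toSet := toSet_measurable I₀
  have hvolS : volume I₀.toSet = ENNReal.ofReal I₀.vol := volume_toSet I₀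
  have hvolS_lt : volume I₀.toSet < ⊤ := by rw [hvolS]; exact ENNReal.ofReal_lt_top
  have hvolS_toReal : (volume I₀.toSet).toReal = I₀.vol := by
    rw [hvolS, ENNReal.toReal_ofReal hv.le]
  have hJnn : 0 ≤ ∫ u in I₀.toSet, Sq p q x u ^ (p - q) :=
    setIntegral_nonneg hS fun u _ => Real.rpow_nonneg (Sq_nonneg p q x u) _
  -- ∫ Sq x ^ p = 1
  have hIx_nn : 0 ≤ ∫ u, Sq p q x u ^ p :=
    integral_nonneg fun u => Real.rpow_nonneg (Sq_nonneg p q x u) p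
  have hIx1 : (∫ u, Sq p q x u ^ p) = 1 := by
    have h := hxnorm
    rw [fpqNorm] at h
    have h2 : (∫ u, Sq p q x u ^ p) = ((∫ u, Sq p q x u ^ p) ^ (1 / p)) ^ p := by
      rw [← Real.rpow_mul hIx_nn, one_div_mul_cancel hpne, Real.rpow_one]
    rw [h2, h, Real.one_rpow]
  -- split on whether x I₀ = 0
  rcases eq_or_lt_of_le (norm_nonneg (x I₀)) with ha0 | ha
  · -- degenerate case
    have hA0 : ‖x I₀‖ ^ (q - 1) * I₀.vol ^ (-(q / p)) *
        (∫ u in I₀.toSet, Sq p q x u ^ (p - q)) = 0 := by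
      rw [← ha0, Real.zero_rpow (by intro h; apply hqne; linarith [sub_eq_zero.1 h] : q - 1 ≠ 0)]
      ring
    rw [hA0, Real.zero_rpow hp'ne, mul_zero, sub_zero]
    have h0 : (fun I => x I - if I = I₀ then (0:𝕜) else 0) = x := by
      funext I; simp
    calc (⨅ lam : 𝕜, fpqNorm p q fun I => x I - if I = I₀ then lam else 0)
        ≤ fpqNorm p q fun I => x I - if I = I₀ then (0:𝕜) else 0 := ciInf_le hbdd 0
      _ = 1 := by rw [h0, hxnorm]
  · -- main case : a := ‖x I₀‖ > 0
    set a := ‖x I₀‖ with ha_def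
    set c := p / q with hc_def
    have hc0 : 0 < c := div_pos hp0 hq0
    have hc1 : c ≤ 1 := (div_le_one hq0).2 hpq
    set w : ℝ := a * I₀.vol ^ (-(1 / p)) with hw_def
    have hw : 0 < w := mul_pos ha (Real.rpow_pos_of_pos hv _)
    set y : DyadicRect d → 𝕜 := fun I => x I - if I = I₀ then x I₀ else 0 with hy_def
    set t : (Fin d → ℝ) → ℝ := I₀.toSet.indicator fun _ => w ^ q with ht_def
    have htnn : ∀ u, 0 ≤ t u := fun u =>
      Set.indicator_nonneg (fun _ _ => Real.rpow_nonneg hw.le q) u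
    have hmt : Measurable t := measurable_const.indicator hS
    -- pointwise description of the I₀ term
    have hfI₀ : ∀ u, (‖x I₀‖ * DyadicRect.indp p I₀ u) ^ q = t u := by
      intro u
      by_cases hu : u ∈ I₀.toSet
      · rw [ht_def]
        simp only [DyadicRect.indp, Set.indicator_of_mem hu, mul_one]
        rfl
      · rw [ht_def]
        simp only [DyadicRect.indp, Set.indicator_of_notMem hu, mul_zero,
          Real.zero_rpow hqne]
    -- pointwise: Sq x and Sq y
    have hTnn : ∀ u, 0 ≤ ∑' I, (‖x I‖ * DyadicRect.indp p I u) ^ q := fun u =>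
      tsum_nonneg fun I =>
        Real.rpow_nonneg (mul_nonneg (norm_nonneg _) (indp_nonneg p I u)) q
    have hSqq : ∀ u, Sq p q x u ^ q = ∑' I, (‖x I‖ * DyadicRect.indp p I u) ^ q := by
      intro u
      rw [Sq, ← Real.rpow_mul (hTnn u), one_div_mul_cancel hqne, Real.rpow_one]
    have htle : ∀ u, t u ≤ ∑' I, (‖x I‖ * DyadicRect.indp p I u) ^ q := by
      intro u
      rw [← hfI₀ u]
      exact Summable.le_tsum (hx1 u) I₀ fun J _ =>
        Real.rpow_nonneg (mul_nonneg (norm_nonneg _) (indp_nonneg p J u)) q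
    have hSqy : ∀ u, Sq p q y u
        = ((∑' I, (‖x I‖ * DyadicRect.indp p I u) ^ q) - t u) ^ (1 / q) := by
      intro u
      rw [Sq]
      congr 1
      have hfun : (fun I => (‖y I‖ * DyadicRect.indp p I u) ^ q)
          = fun I => if I = I₀ then 0 else (‖x I‖ * DyadicRect.indp p I u) ^ q := by
        funext I
        by_cases h : I = I₀
        · simp [hy_def, h, Real.zero_rpow hqne]
        · simp [hy_def, h]
      rw [hfun, ← hfI₀ u]
      have := Summable.tsum_eq_add_tsum_ite (hx1 u) I₀
      linarith [this]
    -- pointwise p-th powers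
    have hxSqp : ∀ u, Sq p q x u ^ p
        = (∑' I, (‖x I‖ * DyadicRect.indp p I u) ^ q) ^ c := by
      intro u
      rw [Sq, ← Real.rpow_mul (hTnn u)]
      congr 1
      rw [hc_def]; ring
    have hySqp : ∀ u, Sq p q y u ^ p
        = ((∑' I, (‖x I‖ * DyadicRect.indp p I u) ^ q) - t u) ^ c := by
      intro u
      rw [hSqy u, ← Real.rpow_mul (by linarith [htle u, htnn u])]
      congr 1
      rw [hc_def]; ring
    have hSqxpq : ∀ u, Sq p q x u ^ (p - q)
        = (∑' I, (‖x I‖ * DyadicRect.indp p I u) ^ q) ^ (c - 1) := by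
      intro u
      rw [Sq, ← Real.rpow_mul (hTnn u)]
      congr 1
      rw [hc_def]
      field_simp
    -- the pointwise key inequality
    have hkey : ∀ u, c * t u * Sq p q x u ^ (p - q)
        ≤ Sq p q x u ^ p - Sq p q y u ^ p := by
      intro u
      rw [hxSqp u, hySqp u, hSqxpq u]
      exact aux_ineq hc0 hc1 (htnn u) (htle u)
    have hg_nn : ∀ u, 0 ≤ c * t u * Sq p q x u ^ (p - q) := fun u =>
      mul_nonneg (mul_nonneg hc0.le (htnn u)) (Real.rpow_nonneg (Sq_nonneg p q x u) _)
    have hy_nn : ∀ u, 0 ≤ Sq p q y u ^ p := fun u =>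
      Real.rpow_nonneg (Sq_nonneg p q y u) p
    have hy_le : ∀ u, Sq p q y u ^ p ≤ Sq p q x u ^ p := fun u => by
      linarith [hkey u, hg_nn u]
    -- measurability
    have hmx : AEMeasurable (fun u => Sq p q x u) := by
      have h2 : AEMeasurable (fun u => Sq p q x u ^ p) :=
        hx2.aestronglyMeasurable.aemeasurable
      have h3 : (fun u => Sq p q x u) = fun u => (Sq p q x u ^ p) ^ p⁻¹ := by
        funext u
        rw [← Real.rpow_mul (Sq_nonneg p q x u), mul_inv_cancel₀ hpne, Real.rpow_one]
      rw [h3]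
      fun_prop
    have hmy : AEMeasurable (fun u => Sq p q y u ^ p) := by
      have h3 : (fun u => Sq p q y u ^ p) = fun u => (Sq p q x u ^ q - t u) ^ c := by
        funext u; rw [hySqp u, hSqq u]
      rw [h3]
      fun_prop
    have hmg : AEMeasurable (fun u => c * t u * Sq p q x u ^ (p - q)) := by fun_prop
    -- integrability
    have hIy : Integrable (fun u => Sq p q y u ^ p) := by
      refine hx2.mono' hmy.aestronglyMeasurable (ae_of_all _ fun u => ?_)
      rw [Real.norm_eq_abs, abs_of_nonneg (hy_nn u)]
      exact hy_le u
    have hdiff : Integrable (fun u => Sq p q x u ^ p - Sq p q y u ^ p) := hx2.sub hIy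
    have hIg : Integrable (fun u => c * t u * Sq p q x u ^ (p - q)) := by
      refine hdiff.mono' hmg.aestronglyMeasurable (ae_of_all _ fun u => ?_)
      rw [Real.norm_eq_abs, abs_of_nonneg (hg_nn u)]
      exact hkey u
    have hint_le : (∫ u, c * t u * Sq p q x u ^ (p - q))
        ≤ ∫ u, (Sq p q x u ^ p - Sq p q y u ^ p) := integral_mono hIg hdiff hkey
    have hint_sub : (∫ u, (Sq p q x u ^ p - Sq p q y u ^ p))
        = 1 - ∫ u, Sq p q y u ^ p := by
      rw [integral_sub hx2 hIy, hIx1]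
    -- compute ∫ g
    have hg_ind : (fun u => c * t u * Sq p q x u ^ (p - q))
        = fun u => I₀.toSet.indicator (fun u => (c * w ^ q) * Sq p q x u ^ (p - q)) u := by
      funext u
      by_cases hu : u ∈ I₀.toSet
      · rw [ht_def]
        simp only [Set.indicator_of_mem hu]
      · rw [ht_def]
        simp only [Set.indicator_of_notMem hu, mul_zero, zero_mul]
    have hIg_val : (∫ u, c * t u * Sq p q x u ^ (p - q))
        = c * w ^ q * ∫ u in I₀.toSet, Sq p q x u ^ (p - q) := by
      rw [hg_ind, integral_indicator hS, integral_const_mul]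
    -- w ^ q = a ^ q * vol ^ (-(q/p))
    have hwq : w ^ q = a ^ q * I₀.vol ^ (-(q / p)) := by
      rw [hw_def, Real.mul_rpow ha.le (Real.rpow_nonneg hv.le _),
        ← Real.rpow_mul hv.le]
      congr 2
      ring
    have haq : a ^ q = a * a ^ (q - 1) := by
      nth_rewrite 1 [show q = 1 + (q - 1) by ring]
      rw [Real.rpow_add ha, Real.rpow_one]
    -- A and the bound ∫ Sq y ^ p ≤ 1 - c * a * A
    set J := ∫ u in I₀.toSet, Sq p q x u ^ (p - q) with hJ_def
    set A := a ^ (q - 1) * I₀.vol ^ (-(q / p)) * J with hA_def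
    have hAnn : 0 ≤ A :=
      mul_nonneg (mul_nonneg (Real.rpow_nonneg ha.le _) (Real.rpow_nonneg hv.le _)) hJnn
    have hIg_A : (∫ u, c * t u * Sq p q x u ^ (p - q)) = c * a * A := by
      rw [hIg_val, hwq, haq, hA_def]
      ring
    have hIy_le : (∫ u, Sq p q y u ^ p) ≤ 1 - c * a * A := by
      rw [← hIg_A]
      linarith [hint_le, hint_sub.symm ▸ hint_le]
    -- A ≤ a ^ (p - 1)
    have hw_le_Sq : ∀ u ∈ I₀.toSet, w ≤ Sq p q x u := by
      intro u hu
      have h1 : w ^ q ≤ ∑' I, (‖x I‖ * DyadicRect.indp p I u) ^ q := by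
        have : t u = w ^ q := by rw [ht_def]; simp [Set.indicator_of_mem hu]
        rw [← this]; exact htle u
      have h2 : (w ^ q) ^ (1 / q) ≤ (∑' I, (‖x I‖ * DyadicRect.indp p I u) ^ q) ^ (1 / q) :=
        Real.rpow_le_rpow (Real.rpow_nonneg hw.le q) h1 (by positivity)
      rwa [← Real.rpow_mul hw.le, mul_one_div, div_self hqne, Real.rpow_one] at h2
    have hbd_on : ∀ u ∈ I₀.toSet, Sq p q x u ^ (p - q) ≤ w ^ (p - q) := fun u hu =>
      Real.rpow_le_rpow_of_nonpos hw (hw_le_Sq u hu) (by linarith)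
    have hconst_int : IntegrableOn (fun _ : Fin d → ℝ => w ^ (p - q)) I₀.toSet volume :=
      integrableOn_const hvolS_lt.ne
    have hmxpq : AEMeasurable fun u => Sq p q x u ^ (p - q) := by fun_prop
    have hint_on : IntegrableOn (fun u => Sq p q x u ^ (p - q)) I₀.toSet volume := by
      refine hconst_int.mono' ?_ ?_
      · exact hmxpq.aestronglyMeasurable.restrict
      · rw [ae_restrict_iff' hS]
        refine ae_of_all _ fun u hu => ?_
        rw [Real.norm_eq_abs, abs_of_nonneg (Real.rpow_nonneg (Sq_nonneg p q x u) _)]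
        exact hbd_on u hu
    have hJle : J ≤ I₀.vol * w ^ (p - q) := by
      rw [hJ_def]
      calc (∫ u in I₀.toSet, Sq p q x u ^ (p - q))
          ≤ ∫ _u in I₀.toSet, w ^ (p - q) := setIntegral_mono_on hint_on hconst_int hS hbd_on
        _ = I₀.vol * w ^ (p - q) := by
            rw [setIntegral_const, smul_eq_mul, measureReal_def, hvolS_toReal]
    have hcomb : a ^ (q-1) * I₀.vol ^ (-(q/p)) * (I₀.vol * w ^ (p-q)) = a ^ (p-1) := by
      rw [hw_def, Real.mul_rpow ha.le (Real.rpow_nonneg hv.le _), ← Real.rpow_mul hv.le]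
      rw [show a ^ (q-1) * I₀.vol ^ (-(q/p)) * (I₀.vol * (a ^ (p-q) * I₀.vol ^ (-(1/p) * (p-q))))
          = (a ^ (q-1) * a ^ (p-q)) * (I₀.vol ^ (-(q/p)) * I₀.vol ^ (1:ℝ) * I₀.vol ^ (-(1/p)*(p-q)))
          by rw [Real.rpow_one]; ring]
      rw [← Real.rpow_add ha, ← Real.rpow_add hv, ← Real.rpow_add hv]
      rw [show q - 1 + (p - q) = p - 1 by ring,
        show -(q/p) + 1 + -(1/p)*(p-q) = 0 by field_simp; ring,
        Real.rpow_zero, mul_one]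
    have hA_le : A ≤ a ^ (p - 1) := by
      rw [hA_def]
      calc a ^ (q-1) * I₀.vol ^ (-(q/p)) * J
          ≤ a ^ (q-1) * I₀.vol ^ (-(q/p)) * (I₀.vol * w ^ (p-q)) := by
            refine mul_le_mul_of_nonneg_left hJle ?_
            exact mul_nonneg (Real.rpow_nonneg ha.le _) (Real.rpow_nonneg hv.le _)
        _ = a ^ (p - 1) := hcomb
    -- A ^ p' ≤ a * A
    have hG : A ^ p' ≤ a * A := by
      rcases eq_or_lt_of_le hAnn with hA0 | hApos
      · rw [← hA0, Real.zero_rpow hp'ne, mul_zero]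
      · calc A ^ p' = A * A ^ (p' - 1) := by
              nth_rewrite 1 [show p' = 1 + (p' - 1) by ring]
              rw [Real.rpow_add hApos, Real.rpow_one]
          _ ≤ A * (a ^ (p - 1)) ^ (p' - 1) := by
              refine mul_le_mul_of_nonneg_left
                (Real.rpow_le_rpow hAnn hA_le (by linarith)) hAnn
          _ = a * A := by
              rw [← Real.rpow_mul ha.le, hpp', Real.rpow_one, mul_comm]
    -- final chain
    have hs0 : 0 ≤ c * a * A := mul_nonneg (mul_nonneg hc0.le ha.le) hAnn
    have hIy_nn : 0 ≤ ∫ u, Sq p q y u ^ p := integral_nonneg hy_nn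
    have hs1 : c * a * A ≤ 1 := by linarith
    have hfin1 : fpqNorm p q y ≤ (1 - c * a * A) ^ (1 / p) := by
      rw [fpqNorm]
      exact Real.rpow_le_rpow hIy_nn hIy_le (by positivity)
    have hfin2 : (1 - c * a * A) ^ (1 / p) ≤ 1 - (1/p) * (c * a * A) :=
      aux_bern (by positivity) (by rw [div_le_one hp0]; linarith) hs0 hs1
    have hfin3 : (1/p) * (c * a * A) = q⁻¹ * (a * A) := by
      rw [hc_def]; field_simp
    have hfin4 : fpqNorm p q y ≤ 1 - q⁻¹ * (a * A) := by
      rw [← hfin3]; linarith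
    have hfin5 : fpqNorm p q y ≤ 1 - q⁻¹ * A ^ p' := by
      have : q⁻¹ * A ^ p' ≤ q⁻¹ * (a * A) :=
        mul_le_mul_of_nonneg_left hG (by positivity)
      linarith
    exact le_trans (ciInf_le hbdd (x I₀)) hfin5
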